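/- The function Υ has the following behavior on (0, ∞): (i) Υ(w) tends to ln 2 as w tends to 0 from the right; (ii) Υ attains its minimum on (0, ∞) at w = 1, where Υ(1) = −ln(e − 2), so that Υ(w) ≥ −ln(e − 2) for all w > 0; and (iii) Υ(w) tends to +∞ as w tends to +∞. -/

import Mathlib

/-- For `w > 0`, `Υ(w) = (w(e^w-1)/(e^w-1-w))·ln w - ln(e^w-1-w)`. -/
noncomputable def Upsilon (w : ℝ) : ℝ :=
  (w * (Real.exp w - 1) / (Real.exp w - 1 - w)) * Real.log w -
    Real.log (Real.exp w - 1 - w)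

open Real Filter Set in
lemma upsilon_D_pos {w : ℝ} (hw : 0 < w) : 0 < Real.exp w - 1 - w := by
  have := Real.add_one_lt_exp (ne_of_gt hw); linarith

open Real Filter Set in
lemma upsilon_key_nonneg {w : ℝ} (hw : 0 ≤ w) :
    0 ≤ (Real.exp w - 1)^2 - w^2 * Real.exp w := by
  have hs : w / 2 ≤ Real.sinh (w / 2) := Real.self_le_sinh_iff.mpr (by linarith)
  rw [Real.sinh_eq] at hs
  have hexp : Real.exp (w/2) * Real.exp (w/2) = Real.exp w := by
    rw [← Real.exp_add]; ring_nf
  have hinv : Real.exp (-(w/2)) * Real.exp (w/2) = 1 := by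
    rw [← Real.exp_add]; simp
  have hp := Real.exp_pos (w/2)
  have h2 : w ≤ Real.exp (w/2) - Real.exp (-(w/2)) := by linarith
  have h3 : w * w ≤ (Real.exp (w/2) - Real.exp (-(w/2))) * (Real.exp (w/2) - Real.exp (-(w/2))) :=
    mul_self_le_mul_self hw h2
  nlinarith [mul_pos hp hp, mul_le_mul_of_nonneg_left h3 (le_of_lt (mul_pos hp hp))]

open Real Filter Set in
lemma upsilon_hasDerivAt {w : ℝ} (hw : 0 < w) :
    HasDerivAt Upsilon
      (((Real.exp w - 1)^2 - w^2 * Real.exp w) / (Real.exp w - 1 - w)^2 * Real.log w) w := by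
  have hD := upsilon_D_pos hw
  have hD' : Real.exp w - 1 - w ≠ 0 := ne_of_gt hD
  have hw' : w ≠ 0 := ne_of_gt hw
  have h1 : HasDerivAt (fun x : ℝ => Real.exp x - 1 - x) (Real.exp w - 1) w := by
    exact ((Real.hasDerivAt_exp w).sub_const 1).sub (hasDerivAt_id w)
  have h2 : HasDerivAt (fun x : ℝ => x * (Real.exp x - 1))
      (1 * (Real.exp w - 1) + w * Real.exp w) w := by
    exact (hasDerivAt_id w).mul ((Real.hasDerivAt_exp w).sub_const 1)
  have h3 := h2.div h1 hD'
  have h4 := h3.mul (Real.hasDerivAt_log hw')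
  have h5 := h1.log hD'
  have h6 := h4.sub h5
  refine h6.congr_deriv ?_
  simp only [Pi.div_apply]
  field_simp
  ring

open Real Filter Set in
lemma upsilon_deriv_eq {w : ℝ} (hw : 0 < w) :
    deriv Upsilon w =
      ((Real.exp w - 1)^2 - w^2 * Real.exp w) / (Real.exp w - 1 - w)^2 * Real.log w :=
  (upsilon_hasDerivAt hw).deriv

open Real Filter Set in
lemma upsilon_min {w : ℝ} (hw : 0 < w) : Upsilon 1 ≤ Upsilon w := by
  have hcont : ∀ x ∈ Set.Ioi (0:ℝ), ContinuousAt Upsilon x :=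
    fun x hx => (upsilon_hasDerivAt hx).continuousAt
  rcases le_or_gt w 1 with h1 | h1
  · have anti : AntitoneOn Upsilon (Set.Ioc 0 1) := by
      apply antitoneOn_of_deriv_nonpos (convex_Ioc 0 1)
      · exact fun x hx => (hcont x hx.1).continuousWithinAt
      · intro x hx
        rw [interior_Ioc] at hx
        exact ((upsilon_hasDerivAt hx.1).differentiableAt).differentiableWithinAt
      · intro x hx
        rw [interior_Ioc] at hx
        rw [upsilon_deriv_eq hx.1]
        apply mul_nonpos_of_nonneg_of_nonpos
        · exact div_nonneg (upsilon_key_nonneg hx.1.le) (by positivity)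
        · exact Real.log_nonpos hx.1.le hx.2.le
    exact anti ⟨hw, h1⟩ ⟨zero_lt_one, le_refl 1⟩ h1
  · have mono : MonotoneOn Upsilon (Set.Ici 1) := by
      apply monotoneOn_of_deriv_nonneg (convex_Ici 1)
      · exact fun x hx => (hcont x (show (0:ℝ) < x from lt_of_lt_of_le zero_lt_one hx)).continuousWithinAt
      · intro x hx
        rw [interior_Ici] at hx
        have hx0 : (0:ℝ) < x := lt_trans zero_lt_one hx
        exact ((upsilon_hasDerivAt hx0).differentiableAt).differentiableWithinAt
      · intro x hx
        rw [interior_Ici] at hx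
        have hx0 : (0:ℝ) < x := lt_trans zero_lt_one hx
        rw [upsilon_deriv_eq hx0]
        apply mul_nonneg
        · exact div_nonneg (upsilon_key_nonneg hx0.le) (by positivity)
        · exact Real.log_nonneg hx.le
    exact mono (Set.mem_Ici.mpr le_rfl) (Set.mem_Ici.mpr h1.le) h1.le

open Real Filter Set in
lemma upsilon_one : Upsilon 1 = -Real.log (Real.exp 1 - 2) := by
  have : Real.exp 1 - 1 - 1 = Real.exp 1 - 2 := by ring
  simp [Upsilon, this]

open Real Filter Set in
lemma upsilon_atTop : Filter.Tendsto Upsilon Filter.atTop Filter.atTop := by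
  have hg : Filter.Tendsto (fun w : ℝ => w * (Real.log w - 1)) Filter.atTop Filter.atTop := by
    apply Filter.Tendsto.atTop_mul_atTop₀ tendsto_id
    exact tendsto_atTop_add_const_right _ (-1) Real.tendsto_log_atTop
  apply tendsto_atTop_mono' _ _ hg
  filter_upwards [Filter.eventually_ge_atTop (Real.exp 1)] with w hw
  have hw1 : (1:ℝ) ≤ w := le_trans (by nlinarith [Real.add_one_lt_exp (one_ne_zero (α := ℝ))]) hw
  have hw0 : (0:ℝ) < w := lt_of_lt_of_le zero_lt_one hw1
  have hD := upsilon_D_pos hw0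
  have hlog1 : (1:ℝ) ≤ Real.log w := by
    rw [← Real.log_exp 1]; exact Real.log_le_log (Real.exp_pos 1) hw
  have hA : w ≤ w * (Real.exp w - 1) / (Real.exp w - 1 - w) := by
    rw [le_div_iff₀ hD]
    nlinarith
  have hlogD : Real.log (Real.exp w - 1 - w) ≤ w := by
    calc Real.log (Real.exp w - 1 - w) ≤ Real.log (Real.exp w) :=
          Real.log_le_log hD (by linarith)
      _ = w := Real.log_exp w
  have heq : w * (Real.log w - 1) = w * Real.log w - w := by ring
  rw [heq]
  unfold Upsilon
  have h1 : w * Real.log w ≤ (w * (Real.exp w - 1) / (Real.exp w - 1 - w)) * Real.log w :=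
    mul_le_mul_of_nonneg_right hA (by linarith)
  linarith

open Real Filter Set in
lemma upsilon_Mp_nonneg {w : ℝ} (hw : 0 ≤ w) : 0 ≤ (w - 1) * Real.exp w + 1 := by
  rcases le_or_gt 1 w with h | h
  · nlinarith [Real.exp_pos w]
  · have hb := Real.exp_bound_div_one_sub_of_interval hw h
    have h1 : (0:ℝ) < 1 - w := by linarith
    rw [le_div_iff₀ h1] at hb
    nlinarith

open Real Filter Set in
lemma upsilon_M_nonneg {w : ℝ} (hw : 0 ≤ w) :
    0 ≤ w * Real.exp w + w - 2 * Real.exp w + 2 := by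
  have hd : ∀ x : ℝ, HasDerivAt (fun x : ℝ => x * Real.exp x + x - 2 * Real.exp x + 2)
      ((x - 1) * Real.exp x + 1) x := by
    intro x
    have := ((((hasDerivAt_id x).mul (Real.hasDerivAt_exp x)).add (hasDerivAt_id x)).sub
      ((Real.hasDerivAt_exp x).const_mul 2)).add_const 2
    refine this.congr_deriv ?_
    simp; ring
  have mono : MonotoneOn (fun x : ℝ => x * Real.exp x + x - 2 * Real.exp x + 2) (Set.Ici 0) := by
    apply monotoneOn_of_deriv_nonneg (convex_Ici 0)
    · exact fun x _ => ((hd x).continuousAt).continuousWithinAt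
    · exact fun x _ => ((hd x).differentiableAt).differentiableWithinAt
    · intro x hx
      rw [interior_Ici] at hx
      rw [(hd x).deriv]
      exact upsilon_Mp_nonneg (le_of_lt hx)
  have := mono (Set.mem_Ici.mpr le_rfl) (Set.mem_Ici.mpr hw) hw
  simpa using this

open Real Filter Set in
lemma upsilon_cubic_bound {w : ℝ} (h0 : 0 ≤ w) (h1 : w ≤ 1) :
    |Real.exp w - (1 + w + w^2/2)| ≤ 2/9 * w^3 := by
  have h := Real.exp_bound (x := w) (by rwa [abs_of_nonneg h0]) (by norm_num : 0 < 3)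
  rw [abs_of_nonneg h0] at h
  norm_num [Finset.sum_range_succ, Nat.factorial] at h
  linarith [h]

open Real Filter Set in
lemma upsilon_zero : Filter.Tendsto Upsilon (nhdsWithin 0 (Set.Ioi 0)) (nhds (Real.log 2)) := by
  have habs : Tendsto (fun w : ℝ => |Real.log w * w|) (nhdsWithin 0 (Set.Ioi 0)) (nhds 0) := by
    have h := tendsto_log_mul_rpow_nhdsGT_zero (r := 1) zero_lt_one
    simp only [Real.rpow_one] at h
    simpa using h.abs
  have hT1 : Tendsto (fun w : ℝ =>
      (w * (Real.exp w - 1) / (Real.exp w - 1 - w) - 2) * Real.log w)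
      (nhdsWithin 0 (Set.Ioi 0)) (nhds 0) := by
    apply squeeze_zero_norm' _ habs
    filter_upwards [self_mem_nhdsWithin] with w hw
    have hw0 : (0:ℝ) < w := hw
    have hD := upsilon_D_pos hw0
    have hM := upsilon_M_nonneg hw0.le
    have hMub : w * Real.exp w + w - 2 * Real.exp w + 2 ≤ w * (Real.exp w - 1 - w) := by
      nlinarith [Real.quadratic_le_exp_of_nonneg hw0.le]
    have hA : w * (Real.exp w - 1) / (Real.exp w - 1 - w) - 2
        = (w * Real.exp w + w - 2 * Real.exp w + 2) / (Real.exp w - 1 - w) := by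
      field_simp; ring
    have h0 : 0 ≤ w * (Real.exp w - 1) / (Real.exp w - 1 - w) - 2 := by
      rw [hA]; positivity
    have hub : w * (Real.exp w - 1) / (Real.exp w - 1 - w) - 2 ≤ w := by
      rw [hA, div_le_iff₀ hD]; nlinarith
    rw [Real.norm_eq_abs, abs_mul, abs_of_nonneg h0, abs_mul]
    rw [abs_of_nonneg hw0.le]
    have := abs_nonneg (Real.log w)
    nlinarith
  have hid : Tendsto (fun w : ℝ => w) (nhdsWithin 0 (Set.Ioi 0)) (nhds 0) :=
    (continuous_id.tendsto 0).mono_left nhdsWithin_le_nhds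
  have hT2 : Tendsto (fun w : ℝ => (Real.exp w - 1 - w) / w^2)
      (nhdsWithin 0 (Set.Ioi 0)) (nhds (1/2)) := by
    have hlow : Tendsto (fun w : ℝ => 1/2 - 2/9 * w) (nhdsWithin 0 (Set.Ioi 0)) (nhds (1/2)) := by
      have := (hid.const_mul (2/9 : ℝ)).const_sub (1/2 : ℝ)
      simpa using this
    have hhigh : Tendsto (fun w : ℝ => 1/2 + 2/9 * w) (nhdsWithin 0 (Set.Ioi 0)) (nhds (1/2)) := by
      have := (hid.const_mul (2/9 : ℝ)).const_add (1/2 : ℝ)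
      simpa using this
    apply tendsto_of_tendsto_of_tendsto_of_le_of_le' hlow hhigh
    · filter_upwards [Ioo_mem_nhdsGT_of_mem (Set.mem_Ico.mpr ⟨le_refl (0:ℝ), zero_lt_one⟩)]
        with w hw
      have hw0 : (0:ℝ) < w := hw.1
      have hcb := upsilon_cubic_bound hw0.le hw.2.le
      rw [abs_le] at hcb
      rw [le_div_iff₀ (by positivity : (0:ℝ) < w^2)]
      nlinarith
    · filter_upwards [Ioo_mem_nhdsGT_of_mem (Set.mem_Ico.mpr ⟨le_refl (0:ℝ), zero_lt_one⟩)]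
        with w hw
      have hw0 : (0:ℝ) < w := hw.1
      have hcb := upsilon_cubic_bound hw0.le hw.2.le
      rw [abs_le] at hcb
      rw [div_le_iff₀ (by positivity : (0:ℝ) < w^2)]
      nlinarith
  have hT2log : Tendsto (fun w : ℝ => Real.log ((Real.exp w - 1 - w) / w^2))
      (nhdsWithin 0 (Set.Ioi 0)) (nhds (Real.log (1/2))) :=
    ((Real.continuousAt_log (by norm_num)).tendsto.comp hT2)
  have heq : ∀ᶠ w in nhdsWithin 0 (Set.Ioi 0),
      ((w * (Real.exp w - 1) / (Real.exp w - 1 - w) - 2) * Real.log w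
        - Real.log ((Real.exp w - 1 - w) / w^2)) = Upsilon w := by
    filter_upwards [self_mem_nhdsWithin] with w hw
    have hw0 : (0:ℝ) < w := hw
    have hD := upsilon_D_pos hw0
    unfold Upsilon
    rw [Real.log_div (ne_of_gt hD) (by positivity), Real.log_pow]
    push_cast
    ring
  have hlim : (0:ℝ) - Real.log (1/2) = Real.log 2 := by
    rw [one_div, Real.log_inv]; ring
  have := (hT1.sub hT2log).congr' heq
  rwa [hlim] at this

/-- The behavior of `Υ` on `(0, ∞)`: it tends to `ln 2` as `w → 0⁺`, attains its
minimum value `-ln(e - 2)` at `w = 1`, and tends to `+∞` as `w → +∞`. -/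
theorem upsilon_behavior :
    Filter.Tendsto Upsilon (nhdsWithin 0 (Set.Ioi 0)) (nhds (Real.log 2)) ∧
    Upsilon 1 = -Real.log (Real.exp 1 - 2) ∧
    (∀ w : ℝ, 0 < w → -Real.log (Real.exp 1 - 2) ≤ Upsilon w) ∧
    Filter.Tendsto Upsilon Filter.atTop Filter.atTop := by
  refine ⟨upsilon_zero, upsilon_one, fun w hw => ?_, upsilon_atTop⟩
  rw [← upsilon_one]
  exact upsilon_min hw
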